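/- arXiv:1304.0528 — 7 statements merged into one kernel-verified Lean document; each statement's English description precedes it below -/
import Mathlib

section
/- The number of maximal repeats in a string of length n is at most n. -/
/-!
The starting positions of two occurrences of words `u`, `v` coincide only if one of `u`, `v` is a
prefix of the other, so the occurrence sets of any family of words form a laminar family of subsets
of `{0, …, n}`. For maximal repeats these sets have at least two elements and determine the repeat,
since a proper extension occurs strictly less often. A laminar family of sets of size at least `2`
in a nonempty ground set `X` has fewer than `|X|` members: contracting a minimal member to a point
keeps the family laminar, loses one member and one point of `X`.
-/

def occs {α : Type*} [DecidableEq α] (w u : List α) : Finset ℕ :=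
  (Finset.range (w.length + 1)).filter (fun i => u <+: w.drop i)

def countOcc {α : Type*} [DecidableEq α] (w u : List α) : ℕ := (occs w u).card
def MaximalRepeat {α : Type*} [DecidableEq α] (w u : List α) : Prop :=
  u <:+: w ∧ 2 ≤ countOcc w u ∧
    ∀ v : List α, u <:+: v → v ≠ u → countOcc w v < countOcc w u

lemma Finset.erase_injOn_of_mem_iff {ι : Type*} [DecidableEq ι] {a b : ι} (hab : a ≠ b) :
    Set.InjOn (fun B : Finset ι => B.erase b) {B | a ∈ B ↔ b ∈ B} := by
  intro B hB C hC (hBC : B.erase b = C.erase b)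
  have ha : a ∈ B ↔ a ∈ C := by simpa [hab] using congrArg (a ∈ ·) hBC
  by_cases hbB : b ∈ B
  · have hbC : b ∈ C := hC.1 (ha.1 (hB.2 hbB))
    rw [← Finset.insert_erase hbB, ← Finset.insert_erase hbC, hBC]
  · have hbC : b ∉ C := fun hbC => hbB (hB.1 (ha.2 (hC.2 hbC)))
    rwa [Finset.erase_eq_of_notMem hbB, Finset.erase_eq_of_notMem hbC] at hBC

def Finset.IsLaminar {ι : Type*} (F : Finset (Finset ι)) : Prop :=
  ∀ A ∈ F, ∀ B ∈ F, A ⊆ B ∨ B ⊆ A ∨ Disjoint A B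

namespace Finset.IsLaminar

variable {ι : Type*} {F : Finset (Finset ι)}

lemma subset (hF : F.IsLaminar) {G : Finset (Finset ι)} (hGF : G ⊆ F) : G.IsLaminar :=
  fun A hA B hB => hF A (hGF hA) B (hGF hB)

lemma ssubset_or_disjoint_of_minimal (hF : F.IsLaminar) {A : Finset ι}
    (hA : Minimal (· ∈ F) A) {B : Finset ι} (hB : B ∈ F) (hBA : B ≠ A) :
    A ⊂ B ∨ Disjoint A B := by
  rcases hF A hA.prop B hB with h | h | h
  · exact .inl (h.ssubset_of_ne hBA.symm)
  · exact absurd (hA.eq_of_le hB h) hBA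
  · exact .inr h

lemma image_erase [DecidableEq ι] (hF : F.IsLaminar) (b : ι) :
    (F.image (fun A : Finset ι => A.erase b)).IsLaminar := by
  simp only [IsLaminar, mem_image, forall_exists_index, and_imp, forall_apply_eq_imp_iff₂]
  intro A hA B hB
  rcases hF A hA B hB with h | h | h
  · exact .inl (erase_subset_erase b h)
  · exact .inr (.inl (erase_subset_erase b h))
  · exact .inr (.inr (h.mono (erase_subset b A) (erase_subset b B)))

lemma two_le_card_erase_of_minimal [DecidableEq ι] (hF : F.IsLaminar)
    (htwo : ∀ A ∈ F, 2 ≤ A.card) {A : Finset ι} (hA : Minimal (· ∈ F) A) {b : ι} (hb : b ∈ A)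
    {B : Finset ι} (hB : B ∈ F.erase A) : 2 ≤ (B.erase b).card := by
  rcases hF.ssubset_or_disjoint_of_minimal hA (mem_of_mem_erase hB) (ne_of_mem_erase hB)
    with hAB | hAB
  · have := card_lt_card hAB
    have := htwo A hA.prop
    rw [card_erase_of_mem (hAB.subset hb)]
    omega
  · rw [erase_eq_of_notMem (disjoint_left.1 hAB hb)]
    exact htwo B (mem_of_mem_erase hB)

theorem card_lt [DecidableEq ι] {X : Finset ι} (hX : X.Nonempty) (hF : F.IsLaminar)
    (hFX : ∀ A ∈ F, A ⊆ X) (htwo : ∀ A ∈ F, 2 ≤ A.card) : F.card < X.card := by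
  induction X using Finset.strongInduction generalizing F with
  | H X ih =>
  rcases F.eq_empty_or_nonempty with rfl | hFne
  · simpa using hX.card_pos
  obtain ⟨A, hA⟩ := F.exists_minimal hFne
  obtain ⟨a, ha, b, hb, hab⟩ := one_lt_card.1 (htwo A hA.prop)
  have hinj : Set.InjOn (fun B : Finset ι => B.erase b) ↑(F.erase A) := by
    refine (erase_injOn_of_mem_iff hab).mono fun B hB => ?_
    rcases hF.ssubset_or_disjoint_of_minimal hA (mem_of_mem_erase hB) (ne_of_mem_erase hB)
      with hAB | hAB
    · exact iff_of_true (hAB.subset ha) (hAB.subset hb)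
    · exact iff_of_false (disjoint_left.1 hAB ha) (disjoint_left.1 hAB hb)
  have hcard : ((F.erase A).image (fun B : Finset ι => B.erase b)).card < (X.erase b).card := by
    refine ih _ (erase_ssubset (hFX A hA.prop hb)) ⟨a, mem_erase.2 ⟨hab, hFX A hA.prop ha⟩⟩
      ((hF.subset (erase_subset A F)).image_erase b) ?_ ?_ <;>
      simp only [mem_image, forall_exists_index, and_imp, forall_apply_eq_imp_iff₂]
    · exact fun B hB => erase_subset_erase b (hFX B (mem_of_mem_erase hB))
    · exact fun B hB => hF.two_le_card_erase_of_minimal htwo hA hb hB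
  rw [card_image_of_injOn hinj, card_erase_of_mem hA.prop,
    card_erase_of_mem (hFX A hA.prop hb)] at hcard
  have := card_pos.2 hFne
  omega

end Finset.IsLaminar

section Occurrences

variable {α : Type*} [DecidableEq α] {w u v : List α}

lemma occs_subset_range : occs w u ⊆ Finset.range (w.length + 1) :=
  Finset.filter_subset _ _

lemma occs_subset_occs_of_prefix (h : u <+: v) : occs w v ⊆ occs w u := by
  intro i hi
  simp only [occs, Finset.mem_filter] at hi ⊢
  exact ⟨hi.1, h.trans hi.2⟩

lemma prefix_or_prefix_of_mem_occs {i : ℕ} (hu : i ∈ occs w u) (hv : i ∈ occs w v) :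
    u <+: v ∨ v <+: u := by
  simp only [occs, Finset.mem_filter] at hu hv
  exact List.prefix_or_prefix_of_prefix hu.2 hv.2

lemma isLaminar_image_occs (w : List α) (S : Finset (List α)) :
    (S.image (occs w)).IsLaminar := by
  simp only [Finset.IsLaminar, Finset.mem_image, forall_exists_index, and_imp,
    forall_apply_eq_imp_iff₂]
  intro u _ v _
  rcases Finset.disjoint_or_nonempty_inter (occs w u) (occs w v) with h | ⟨i, hi⟩
  · exact .inr (.inr h)
  · rw [Finset.mem_inter] at hi
    rcases prefix_or_prefix_of_mem_occs hi.1 hi.2 with h | h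
    · exact .inr (.inl (occs_subset_occs_of_prefix h))
    · exact .inl (occs_subset_occs_of_prefix h)

lemma MaximalRepeat.eq_of_occs_eq (hu : MaximalRepeat w u) (hv : MaximalRepeat w v)
    (h : occs w u = occs w v) : u = v := by
  have hcount : countOcc w u = countOcc w v := congrArg Finset.card h
  obtain ⟨i, hi⟩ := Finset.card_pos.1 (lt_of_lt_of_le two_pos hu.2.1)
  by_contra hne
  rcases prefix_or_prefix_of_mem_occs hi (h ▸ hi) with huv | hvu
  · exact (hu.2.2 v huv.isInfix (Ne.symm hne)).ne hcount.symm
  · exact (hv.2.2 u hvu.isInfix hne).ne hcount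

end Occurrences

/-- The number of (distinct) maximal repeats in a string of length `n` is at most `n`. -/
theorem stmt0 {α : Type*} [DecidableEq α] (w : List α) (S : Finset (List α))
    (hS : ∀ u ∈ S, MaximalRepeat w u) : S.card ≤ w.length := by
  have hinj : Set.InjOn (occs w) S := fun u hu v hv =>
    (hS u hu).eq_of_occs_eq (hS v hv)
  have hlt : (S.image (occs w)).card < (Finset.range (w.length + 1)).card :=
    (isLaminar_image_occs w S).card_lt Finset.nonempty_range_add_one
      (by simpa using fun _ _ => occs_subset_range)
      (by simpa [countOcc] using fun u hu => (hS u hu).2.1)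
  rw [Finset.card_image_of_injOn hinj, Finset.card_range] at hlt
  omega
end

section
/- A substring of a given string is a maximal repeat if and only if it is both maximal to the right and maximal to the left. -/
/-!
The number of occurrences is antitone for the infix order, and every proper superstring of `u`
contains `u ++ [c]` or `c :: u` for some letter `c`; so it suffices to test one-letter extensions.
-/

section Occurrences

variable {α : Type*} [DecidableEq α]

theorem countOcc_le_of_isPrefix (w : List α) {s t : List α} (h : s <+: t) :
    countOcc w t ≤ countOcc w s := by
  refine Finset.card_le_card fun i hi => ?_
  simp only [occs, Finset.mem_filter] at hi ⊢
  exact ⟨hi.1, h.trans hi.2⟩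

/-- Shifting by `a.length` maps occurrences of `a ++ s` injectively to occurrences of `s`. -/
theorem countOcc_append_left_le (w a s : List α) :
    countOcc w (a ++ s) ≤ countOcc w s := by
  refine Finset.card_le_card_of_injOn (· + a.length) (fun i hi => ?_)
    (fun i _ j _ h => Nat.add_right_cancel h)
  simp only [occs, Finset.coe_filter, Finset.mem_range, Set.mem_ofPred_eq] at hi ⊢
  obtain ⟨hi, t, ht⟩ := hi
  have hlen := congrArg List.length ht
  simp only [List.length_append, List.length_drop] at hlen
  refine ⟨?_, t, ?_⟩
  · omega
  · rw [← List.drop_drop, ← ht, List.append_assoc, List.drop_left]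

theorem countOcc_le_of_isInfix (w : List α) {u v : List α} (h : u <:+: v) :
    countOcc w v ≤ countOcc w u := by
  obtain ⟨a, b, rfl⟩ := h
  calc countOcc w (a ++ u ++ b) ≤ countOcc w (a ++ u) :=
        countOcc_le_of_isPrefix w (List.prefix_append _ _)
    _ ≤ countOcc w u := countOcc_append_left_le w a u

end Occurrences

theorem List.exists_singleton_extension_isInfix {α : Type*} {u v : List α}
    (h : u <:+: v) (hne : v ≠ u) : ∃ c, u ++ [c] <:+: v ∨ c :: u <:+: v := by
  obtain ⟨a, b, rfl⟩ := h
  rcases b with _ | ⟨c, b⟩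
  · rcases a.eq_nil_or_concat with rfl | ⟨a, c, rfl⟩
    · simp at hne
    · exact ⟨c, .inr ⟨a, [], by simp⟩⟩
  · exact ⟨c, .inl ⟨a, b, by simp⟩⟩

/-- A substring occurring at least twice is a maximal repeat iff it is maximal to the
right and maximal to the left. -/
theorem stmt1 {α : Type*} [DecidableEq α] (w u : List α)
    (hu : u <:+: w) (h2 : 2 ≤ countOcc w u) :
    MaximalRepeat w u ↔
      ((∀ c : α, countOcc w (u ++ [c]) < countOcc w u) ∧
       (∀ c : α, countOcc w (c :: u) < countOcc w u)) := by
  constructor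
  · rintro ⟨-, -, hmax⟩
    exact ⟨fun c => hmax _ (List.prefix_append u [c]).isInfix (by simp),
      fun c => hmax _ (List.suffix_cons c u).isInfix (by simp)⟩
  · rintro ⟨hright, hleft⟩
    refine ⟨hu, h2, fun v huv hne => ?_⟩
    obtain ⟨c, hc | hc⟩ := List.exists_singleton_extension_isInfix huv hne
    · exact (countOcc_le_of_isInfix w hc).trans_lt (hright c)
    · exact (countOcc_le_of_isInfix w hc).trans_lt (hleft c)
end

section
/- Let u be a substring of w that is repeated and maximal to the right, with occurrences addressed by the suffix-array interval [i, i+k-1]. Then u is also maximal to the left if and only if: w[r[i]-1] ≠ w[r[i+k-1]-1], or r[i] = 1, or r[i+k-1] = 1, or p[r[i+k-1]-1] - p[r[i]-1] ≠ k-1. -/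
/-- `r` is the suffix array of `w` (0-indexed): `r` maps `{0,...,n-1}` bijectively onto
itself and lists the starting positions of the suffixes of `w` in strictly increasing
lexicographic order. -/
def IsSuffixArray {α : Type*} [LinearOrder α] (w : List α) (r : ℕ → ℕ) : Prop :=
  (∀ i, i < w.length → r i < w.length) ∧
  (∀ i j, i < w.length → j < w.length → i ≠ j → r i ≠ r j) ∧
  (∀ i j, i < j → j < w.length → List.Lex (· < ·) (w.drop (r i)) (w.drop (r j)))

/-! The left extensions `c u` of `u` occur exactly one position before the occurrences of `u`
that are preceded by `c`. If one of them occurs as often as `u`, then its occurrences, read in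
suffix order, form the block `[p (r i - 1), p (r (i+k-1) - 1)]`: prepending `c` preserves the
order of the suffixes, and every suffix lying lexicographically between two suffixes starting
with `c u` starts with `c u` as well. So that block has exactly `k` elements. Conversely, if the
extreme occurrences of `u` are both preceded by `c` and the block has `k` elements, then `c u`
occurs at least `k` times. -/

theorem Nat.add_sub_le_of_strictMonoOn {f : ℕ → ℕ} {a b : ℕ}
    (hf : StrictMonoOn f (Set.Icc a b)) (hab : a ≤ b) : f a + (b - a) ≤ f b := by
  have hsub : (Finset.Icc a b).image f ⊆ Finset.Icc (f a) (f b) := by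
    intro y hy
    obtain ⟨x, hx, rfl⟩ := Finset.mem_image.mp hy
    obtain ⟨hax, hxb⟩ := Finset.mem_Icc.mp hx
    exact Finset.mem_Icc.mpr ⟨hf.monotoneOn ⟨le_rfl, hab⟩ ⟨hax, hxb⟩ hax,
      hf.monotoneOn ⟨hax, hxb⟩ ⟨hab, le_rfl⟩ hxb⟩
  have hcard := Finset.card_le_card hsub
  rw [Finset.card_image_of_injOn (by simpa using hf.injOn), Nat.card_Icc, Nat.card_Icc] at hcard
  omega

theorem List.prefix_of_not_lex_of_not_lex {α : Type*} [LinearOrder α] :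
    ∀ (q : List α) {x y z : List α}, q <+: x → q <+: z →
      ¬ List.Lex (· < ·) y x → ¬ List.Lex (· < ·) z y → q <+: y
  | [], _, y, _, _, _, _, _ => ⟨y, rfl⟩
  | a :: q, x, y, z, hx, hz, hyx, hzy => by
    obtain ⟨x', rfl⟩ := hx
    obtain ⟨z', rfl⟩ := hz
    match y with
    | [] => exact absurd List.Lex.nil hyx
    | b :: y' =>
      obtain rfl : a = b := by
        rcases lt_trichotomy a b with h | h | h
        · exact absurd (List.Lex.rel h) hzy
        · exact h
        · exact absurd (List.Lex.rel h) hyx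
      exact List.cons_prefix_cons.mpr ⟨rfl, prefix_of_not_lex_of_not_lex q
        (q.prefix_append x') (q.prefix_append z')
        (fun h => hyx (List.Lex.cons h)) (fun h => hzy (List.Lex.cons h))⟩

section Occurrences

variable {α : Type*} [DecidableEq α] {w u : List α} {c : α} {m : ℕ}

theorem mem_occs : m ∈ occs w u ↔ m ≤ w.length ∧ u <+: w.drop m := by
  simp [occs]

theorem mem_occs_cons : m ∈ occs w (c :: u) ↔ m + 1 ∈ occs w u ∧ w[m]? = some c := by
  simp only [mem_occs]
  constructor
  · rintro ⟨-, hpre⟩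
    have hm : m < w.length := by
      by_contra! h
      simp [List.drop_eq_nil_of_le h] at hpre
    rw [List.drop_eq_getElem_cons hm] at hpre
    obtain ⟨rfl, hu⟩ := List.cons_prefix_cons.mp hpre
    exact ⟨⟨hm, hu⟩, List.getElem?_eq_getElem hm⟩
  · rintro ⟨⟨hm, hpre⟩, hc⟩
    obtain ⟨hm, rfl⟩ := List.getElem?_eq_some_iff.mp hc
    rw [List.drop_eq_getElem_cons hm]
    exact ⟨hm.le, List.cons_prefix_cons.mpr ⟨rfl, hpre⟩⟩

theorem image_succ_occs_cons_subset : (occs w (c :: u)).image (· + 1) ⊆ occs w u := by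
  intro m hm
  obtain ⟨m', hm', rfl⟩ := Finset.mem_image.mp hm
  exact (mem_occs_cons.mp hm').1

theorem card_image_succ_occs_cons : ((occs w (c :: u)).image (· + 1)).card = countOcc w (c :: u) :=
  Finset.card_image_of_injective _ (add_left_injective 1)

theorem countOcc_cons_le : countOcc w (c :: u) ≤ countOcc w u := by
  rw [← card_image_succ_occs_cons]
  exact Finset.card_le_card image_succ_occs_cons_subset

theorem sub_one_mem_occs_cons (hm0 : m ≠ 0) (hc : w[m - 1]? = some c) (hm : m ∈ occs w u) :
    m - 1 ∈ occs w (c :: u) :=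
  mem_occs_cons.mpr ⟨by rwa [Nat.sub_add_cancel (Nat.pos_of_ne_zero hm0)], hc⟩

theorem pred_mem_occs_cons_of_countOcc_le (h : countOcc w u ≤ countOcc w (c :: u))
    (hm : m ∈ occs w u) : m ≠ 0 ∧ m - 1 ∈ occs w (c :: u) := by
  have himage : (occs w (c :: u)).image (· + 1) = occs w u :=
    Finset.eq_of_subset_of_card_le image_succ_occs_cons_subset (by rwa [card_image_succ_occs_cons])
  rw [← himage] at hm
  obtain ⟨m', hm', rfl⟩ := Finset.mem_image.mp hm
  exact ⟨m'.succ_ne_zero, hm'⟩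

end Occurrences

namespace IsSuffixArray

variable {α : Type*} [LinearOrder α] {w : List α} {r p : ℕ → ℕ}

theorem injOn (hr : IsSuffixArray w r) : Set.InjOn r (Set.Iio w.length) := by
  intro a ha b hb hab
  by_contra hne
  exact hr.2.1 a b ha hb hne hab

theorem not_lex_of_le (hr : IsSuffixArray w r) {a b : ℕ} (hab : a ≤ b) (hb : b < w.length) :
    ¬ List.Lex (· < ·) (w.drop (r b)) (w.drop (r a)) := by
  intro h
  rcases hab.eq_or_lt with rfl | hab
  · exact asymm h h
  · exact asymm (hr.2.2 a b hab hb) h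

theorem surjOn (hr : IsSuffixArray w r) :
    Set.SurjOn r (Set.Iio w.length) (Set.Iio w.length) :=
  ((Set.finite_Iio _).injOn_iff_bijOn_of_mapsTo (fun _ ha => hr.1 _ ha)).mp hr.injOn |>.surjOn

theorem countOcc_eq_of_occs_eq (hr : IsSuffixArray w r) {u : List α} {i k : ℕ}
    (hocc : occs w u = (Finset.Ico i (i + k)).image r) (hik : i + k ≤ w.length) :
    countOcc w u = k := by
  rw [countOcc, hocc, Finset.card_image_of_injOn, Nat.card_Ico, Nat.add_sub_cancel_left]
  exact hr.injOn.mono fun t ht => by simp only [Finset.coe_Ico, Set.mem_Ico] at ht; simp; omega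

variable (hr : IsSuffixArray w r) (hp : ∀ i, i < w.length → p (r i) = i)
include hr hp

theorem inv_lt {m : ℕ} (hm : m < w.length) : p m < w.length := by
  obtain ⟨t, ht, rfl⟩ := hr.surjOn hm
  rwa [hp t ht]

theorem apply_inv {m : ℕ} (hm : m < w.length) : r (p m) = m := by
  obtain ⟨t, ht, rfl⟩ := hr.surjOn hm
  rw [hp t ht]

theorem inv_lt_inv_of_lex {m m' : ℕ} (hm : m < w.length) (hm' : m' < w.length)
    (h : List.Lex (· < ·) (w.drop m) (w.drop m')) : p m < p m' := by
  by_contra! hle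
  rw [← hr.apply_inv hp hm, ← hr.apply_inv hp hm'] at h
  exact hr.not_lex_of_le hle (hr.inv_lt hp hm) h

/-- Prepending the same letter to two suffixes keeps their order. -/
theorem inv_lt_inv_of_getElem?_eq {c : α} {m m' t t' : ℕ} (hc : w[m]? = some c)
    (hc' : w[m']? = some c) (ht : r t = m + 1) (ht' : r t' = m' + 1) (htt' : t < t')
    (ht'n : t' < w.length) : p m < p m' := by
  obtain ⟨hm, rfl⟩ := List.getElem?_eq_some_iff.mp hc
  obtain ⟨hm', hcc⟩ := List.getElem?_eq_some_iff.mp hc'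
  refine hr.inv_lt_inv_of_lex hp hm hm' ?_
  rw [List.drop_eq_getElem_cons hm, List.drop_eq_getElem_cons hm', hcc, ← ht, ← ht']
  exact List.Lex.cons (hr.2.2 t t' htt' ht'n)

/-- The suffixes starting with `q` form an interval of the suffix array. -/
theorem inv_sub_le_countOcc {q : List α} {m m' : ℕ} (hm : m ∈ occs w q) (hm' : m' ∈ occs w q)
    (hmn : m < w.length) (hm'n : m' < w.length) : p m' + 1 - p m ≤ countOcc w q := by
  have hsub : (Finset.Icc (p m) (p m')).image r ⊆ occs w q := by
    intro x hx
    obtain ⟨s, hs, rfl⟩ := Finset.mem_image.mp hx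
    obtain ⟨hms, hsm'⟩ := Finset.mem_Icc.mp hs
    have hsn : s < w.length := lt_of_le_of_lt hsm' (hr.inv_lt hp hm'n)
    refine mem_occs.mpr ⟨(hr.1 s hsn).le, ?_⟩
    refine List.prefix_of_not_lex_of_not_lex q (mem_occs.mp hm).2 (mem_occs.mp hm').2 ?_ ?_
    · rw [← hr.apply_inv hp hmn]
      exact hr.not_lex_of_le hms hsn
    · rw [← hr.apply_inv hp hm'n]
      exact hr.not_lex_of_le hsm' (hr.inv_lt hp hm'n)
  calc p m' + 1 - p m = ((Finset.Icc (p m) (p m')).image r).card := by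
        rw [Finset.card_image_of_injOn, Nat.card_Icc]
        intro x hx y hy
        simp only [Finset.coe_Icc, Set.mem_Icc] at hx hy
        exact hr.injOn (lt_of_le_of_lt hx.2 (hr.inv_lt hp hm'n))
          (lt_of_le_of_lt hy.2 (hr.inv_lt hp hm'n))
    _ ≤ countOcc w q := Finset.card_le_card hsub

theorem pred_extremes_of_le_countOcc_cons {u : List α} {c : α} {i k : ℕ}
    (hocc : occs w u = (Finset.Ico i (i + k)).image r) (hik : i + k ≤ w.length) (hk : 0 < k)
    (h : k ≤ countOcc w (c :: u)) :
    r i ≠ 0 ∧ r (i + k - 1) ≠ 0 ∧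
      w[r i - 1]? = some c ∧ w[r (i + k - 1) - 1]? = some c ∧
      p (r (i + k - 1) - 1) - p (r i - 1) = k - 1 := by
  set j := i + k - 1
  have hpred : ∀ t, i ≤ t → t ≤ j → r t ≠ 0 ∧ r t - 1 ∈ occs w (c :: u) :=
    fun t hit htj => pred_mem_occs_cons_of_countOcc_le
      (hr.countOcc_eq_of_occs_eq hocc hik ▸ h)
      (hocc ▸ Finset.mem_image_of_mem r (Finset.mem_Ico.mpr ⟨hit, by omega⟩))
  have hprec : ∀ t, i ≤ t → t ≤ j → w[r t - 1]? = some c := fun t hit htj =>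
    (mem_occs_cons.mp (hpred t hit htj).2).2
  have hlt : ∀ t, t ≤ j → r t - 1 < w.length := fun t htj =>
    lt_of_le_of_lt (Nat.sub_le _ _) (hr.1 t (by omega))
  have hmono : StrictMonoOn (fun t => p (r t - 1)) (Set.Icc i j) := by
    rintro t ⟨hit, htj⟩ t' ⟨hit', ht'j⟩ htt'
    exact hr.inv_lt_inv_of_getElem?_eq hp (hprec t hit htj) (hprec t' hit' ht'j)
      (by have := (hpred t hit htj).1; omega) (by have := (hpred t' hit' ht'j).1; omega)
      htt' (by omega)
  have hlow := Nat.add_sub_le_of_strictMonoOn hmono (by omega)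
  have hup := hr.inv_sub_le_countOcc hp (hpred i le_rfl (by omega)).2
    (hpred j (by omega) le_rfl).2 (hlt i (by omega)) (hlt j le_rfl)
  have hle := hr.countOcc_eq_of_occs_eq hocc hik ▸ countOcc_cons_le (w := w) (u := u) (c := c)
  exact ⟨(hpred i le_rfl (by omega)).1, (hpred j (by omega) le_rfl).1, hprec i le_rfl (by omega),
    hprec j (by omega) le_rfl, by omega⟩

theorem le_countOcc_cons_of_pred_extremes {u : List α} {c : α} {i k : ℕ}
    (hocc : occs w u = (Finset.Ico i (i + k)).image r) (hik : i + k ≤ w.length) (hk : 2 ≤ k)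
    (hi0 : r i ≠ 0) (hj0 : r (i + k - 1) ≠ 0) (hci : w[r i - 1]? = some c)
    (hcj : w[r (i + k - 1) - 1]? = some c)
    (hdiff : p (r (i + k - 1) - 1) - p (r i - 1) = k - 1) : k ≤ countOcc w (c :: u) := by
  have hmem : ∀ t, i ≤ t → t < i + k → r t - 1 < w.length ∧ r t ∈ occs w u :=
    fun t hit htk => ⟨lt_of_le_of_lt (Nat.sub_le _ _) (hr.1 t (by omega)),
      hocc ▸ Finset.mem_image_of_mem r (Finset.mem_Ico.mpr ⟨hit, htk⟩)⟩
  obtain ⟨hi, hiu⟩ := hmem i le_rfl (by omega)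
  obtain ⟨hj, hju⟩ := hmem (i + k - 1) (by omega) (by omega)
  have := hr.inv_sub_le_countOcc hp (sub_one_mem_occs_cons hi0 hci hiu)
    (sub_one_mem_occs_cons hj0 hcj hju) hi hj
  omega

end IsSuffixArray

theorem stmt4_general {α : Type*} [LinearOrder α] (w : List α) (r p : ℕ → ℕ)
    (hr : IsSuffixArray w r) (hp : ∀ i, i < w.length → p (r i) = i)
    (u : List α) (i k : ℕ) (hk : 2 ≤ k) (hik : i + k ≤ w.length)
    (hocc : occs w u = (Finset.Ico i (i + k)).image r) :
    (∀ c : α, countOcc w (c :: u) < countOcc w u) ↔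
      (w[r i - 1]? ≠ w[r (i + k - 1) - 1]? ∨ r i = 0 ∨ r (i + k - 1) = 0 ∨
        p (r (i + k - 1) - 1) - p (r i - 1) ≠ k - 1) := by
  have hcount := hr.countOcc_eq_of_occs_eq hocc hik
  constructor
  · intro hL
    by_contra! hfail
    obtain ⟨hwij, hi0, hj0, hdiff⟩ := hfail
    obtain ⟨c, hci⟩ : ∃ c, w[r i - 1]? = some c :=
      ⟨_, List.getElem?_eq_getElem (lt_of_le_of_lt (Nat.sub_le _ _) (hr.1 i (by omega)))⟩
    have hle := hr.le_countOcc_cons_of_pred_extremes hp hocc hik hk hi0 hj0 hci (hwij ▸ hci) hdiff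
    exact (hcount ▸ hL c).not_ge hle
  · intro hcond c
    by_contra! hge
    obtain ⟨hi0, hj0, hci, hcj, hdiff⟩ :=
      hr.pred_extremes_of_le_countOcc_cons hp hocc hik (by omega) (hcount ▸ hge)
    rcases hcond with hwij | hi0' | hj0' | hdiff'
    · exact hwij (hci.trans hcj.symm)
    · exact hi0 hi0'
    · exact hj0 hj0'
    · exact hdiff' hdiff

/-- For a repeated substring `u` maximal to the right, occurring exactly at the
suffix-array interval `[i, i+k-1]`, left-maximality is equivalent to the stated
condition on the extreme occurrences. -/
theorem stmt4 {α : Type*} [LinearOrder α] (w : List α) (r p : ℕ → ℕ)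
    (hr : IsSuffixArray w r) (hp : ∀ i, i < w.length → p (r i) = i)
    (u : List α) (i k : ℕ) (hk : 2 ≤ k) (hik : i + k ≤ w.length)
    (hocc : occs w u = (Finset.Ico i (i + k)).image r)
    (hright : ∀ c : α, countOcc w (u ++ [c]) < countOcc w u) :
    (∀ c : α, countOcc w (c :: u) < countOcc w u) ↔
      (w[r i - 1]? ≠ w[r (i + k - 1) - 1]? ∨ r i = 0 ∨ r (i + k - 1) = 0 ∨
        p (r (i + k - 1) - 1) - p (r i - 1) ≠ k - 1) :=
  stmt4_general w r p hr hp u i k hk hik hocc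
end

section
/- If a symbol c and substring u satisfy that cu occurs the same number of times in w as u, and u occurs at suffix-array positions r[i], ..., r[i+k-1], then for each j = 0..k-1, p[r[i+j]-1] = p[r[i]-1] + j; in particular the suffix-array positions of the occurrences of cu form the contiguous interval [p[r[i]-1], p[r[i]-1]+k-1] in the same relative order. -/
private lemma mem_occs_iff {α : Type*} [DecidableEq α] {w u : List α} {q : ℕ} :
    q ∈ occs w u ↔ q ≤ w.length ∧ u <+: w.drop q := by
  simp [occs, Nat.lt_succ_iff]

private lemma prefix_between {α : Type*} [LinearOrder α] :
    ∀ (s m a b : List α), s <+: a → s <+: b →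
      List.Lex (· < ·) a m → List.Lex (· < ·) m b → s <+: m := by
  intro s
  induction s with
  | nil => intro m a b _ _ _ _; exact List.nil_prefix
  | cons h t ih =>
    intro m a b hsa hsb ham hmb
    obtain ⟨a', rfl⟩ := hsa
    obtain ⟨b', rfl⟩ := hsb
    cases ham with
    | cons h1 =>
      cases hmb with
      | cons h2 =>
        exact List.cons_prefix_cons.mpr
          ⟨rfl, ih _ _ _ (List.prefix_append t a') (List.prefix_append t b') h1 h2⟩
      | rel h2 => exact absurd h2 (lt_irrefl _)
    | rel h1 =>
      cases hmb with
      | cons h2 => exact absurd h1 (lt_irrefl _)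
      | rel h2 => exact absurd (h1.trans h2) (lt_irrefl _)

/-- If `c·u` occurs exactly as many times as `u`, the suffix-array positions of the
occurrences of `c·u` form a contiguous interval in the same relative order. -/
theorem stmt5 {α : Type*} [LinearOrder α] (w : List α) (r p : ℕ → ℕ)
    (hr : IsSuffixArray w r) (hp : ∀ i, i < w.length → p (r i) = i)
    (u : List α) (c : α) (i k : ℕ) (hik : i + k ≤ w.length)
    (hocc : occs w u = (Finset.Ico i (i + k)).image r)
    (hku : countOcc w u = k) (hkc : countOcc w (c :: u) = k) :
    (∀ j, j < k → p (r (i + j) - 1) = p (r i - 1) + j) ∧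
      occs w (c :: u) = (Finset.Ico (p (r i - 1)) (p (r i - 1) + k)).image r := by
  obtain ⟨hr1, hr2, hr3⟩ := hr
  set n := w.length with hn
  -- surjectivity of r onto [0, n)
  have hsurj : ∀ t, t < n → ∃ x, x < n ∧ r x = t := by
    intro t ht
    have himg : (Finset.range n).image r = Finset.range n := by
      apply Finset.eq_of_subset_of_card_le
      · intro y hy
        simp only [Finset.mem_image, Finset.mem_range] at hy ⊢
        obtain ⟨x, hx, rfl⟩ := hy
        exact hr1 x hx
      · rw [Finset.card_image_of_injOn]
        intro a ha b hb hab
        simp only [Finset.coe_range, Set.mem_Iio] at ha hb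
        by_contra hne
        exact hr2 a b ha hb hne hab
    have : t ∈ (Finset.range n).image r := by rw [himg]; simpa using ht
    simp only [Finset.mem_image, Finset.mem_range] at this
    obtain ⟨x, hx, hrx⟩ := this
    exact ⟨x, hx, hrx⟩
  have hrinj : ∀ a b, a < n → b < n → r a = r b → a = b := by
    intro a b ha hb hab
    by_contra hne
    exact hr2 a b ha hb hne hab
  -- shifting an occurrence of c::u gives an occurrence of u
  have hsub : (occs w (c :: u)).image (· + 1) ⊆ occs w u := by
    intro q hq
    simp only [Finset.mem_image] at hq
    obtain ⟨m, hm, rfl⟩ := hq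
    rw [mem_occs_iff] at hm ⊢
    obtain ⟨hm1, t, ht⟩ := hm
    have hmn : m < n := by
      by_contra h
      push_neg at h
      rw [List.drop_eq_nil_of_le h] at ht
      simp at ht
    have hdrop : w.drop (m + 1) = u ++ t := by
      have h1 : w.drop (m + 1) = (w.drop m).drop 1 := by rw [List.drop_drop]
      rw [h1, ← ht]
      simp
    exact ⟨by omega, t, by rw [hdrop]⟩
  have hA : occs w u = (occs w (c :: u)).image (· + 1) := by
    apply (Finset.eq_of_subset_of_card_le hsub ?_).symm
    rw [Finset.card_image_of_injective _ (add_left_injective 1)]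
    show (occs w u).card ≤ (occs w (c :: u)).card
    rw [show (occs w u).card = k from hku, show (occs w (c :: u)).card = k from hkc]
  -- every occurrence of u is preceded by c
  have hmem : ∀ q ∈ occs w u, 1 ≤ q ∧ q - 1 ∈ occs w (c :: u) ∧
      w.drop (q - 1) = c :: w.drop q := by
    intro q hq
    rw [hA] at hq
    simp only [Finset.mem_image] at hq
    obtain ⟨m, hm, rfl⟩ := hq
    have hm' := hm
    rw [mem_occs_iff] at hm'
    obtain ⟨hm1, t, ht⟩ := hm'
    have hdrop : w.drop (m + 1) = u ++ t := by
      have h1 : w.drop (m + 1) = (w.drop m).drop 1 := by rw [List.drop_drop]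
      rw [h1, ← ht]
      simp
    refine ⟨by omega, by simpa using hm, ?_⟩
    simp only [Nat.add_sub_cancel]
    rw [← ht, hdrop]
    simp
  have hqmem : ∀ j, j < k → r (i + j) ∈ occs w u := by
    intro j hj
    rw [hocc]
    exact Finset.mem_image_of_mem r (by simp [Finset.mem_Ico]; omega)
  -- the suffix-array index of each shifted occurrence
  have hx : ∀ j, j < k → p (r (i + j) - 1) < n ∧ r (p (r (i + j) - 1)) = r (i + j) - 1 := by
    intro j hj
    obtain ⟨h1, h2, h3⟩ := hmem _ (hqmem j hj)
    have hlt : r (i + j) - 1 < n := by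
      rw [mem_occs_iff] at h2
      obtain ⟨hle, t, ht⟩ := h2
      by_contra h
      push_neg at h
      rw [List.drop_eq_nil_of_le h] at ht
      simp at ht
    obtain ⟨x, hxn, hrx⟩ := hsurj _ hlt
    have hpx := hp x hxn
    rw [hrx] at hpx
    rw [hpx]
    exact ⟨hxn, hrx⟩
  have hcupre : ∀ j, j < k → (c :: u) <+: w.drop (r (i + j) - 1) := by
    intro j hj
    have h2 := (hmem _ (hqmem j hj)).2.1
    rw [mem_occs_iff] at h2
    exact h2.2
  -- strict monotonicity
  have hmono : ∀ j j', j < j' → j' < k → p (r (i + j) - 1) < p (r (i + j') - 1) := by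
    intro j j' hjj hj'
    obtain ⟨hxn, hrx⟩ := hx j (hjj.trans hj')
    obtain ⟨hxn', hrx'⟩ := hx j' hj'
    have hlex : List.Lex (· < ·) (w.drop (r (i + j) - 1)) (w.drop (r (i + j') - 1)) := by
      obtain ⟨_, _, hd⟩ := hmem _ (hqmem j (hjj.trans hj'))
      obtain ⟨_, _, hd'⟩ := hmem _ (hqmem j' hj')
      rw [hd, hd']
      exact List.Lex.cons (hr3 (i + j) (i + j') (by omega) (by omega))
    rcases lt_trichotomy (p (r (i + j) - 1)) (p (r (i + j') - 1)) with h | h | h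
    · exact h
    · exfalso
      have heq : r (i + j) - 1 = r (i + j') - 1 := by rw [← hrx, ← hrx', h]
      rw [heq] at hlex
      exact asymm hlex hlex
    · exfalso
      have := hr3 _ _ h hxn
      rw [hrx, hrx'] at this
      exact asymm hlex this
  -- consecutive occurrences map to consecutive suffix-array indices
  have hsucc : ∀ j, j + 1 < k → p (r (i + (j + 1)) - 1) = p (r (i + j) - 1) + 1 := by
    intro j hj
    have hlt := hmono j (j + 1) (by omega) hj
    by_contra hne
    have hgap : p (r (i + j) - 1) + 1 < p (r (i + (j + 1)) - 1) := by omega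
    set y := p (r (i + j) - 1) + 1 with hy
    have hyn : y < n := by have := (hx (j + 1) hj).1; omega
    obtain ⟨hxn, hrx⟩ := hx j (by omega)
    obtain ⟨hxn', hrx'⟩ := hx (j + 1) hj
    have hprefy : (c :: u) <+: w.drop (r y) := by
      apply prefix_between (c :: u) (w.drop (r y)) (w.drop (r (i + j) - 1))
        (w.drop (r (i + (j + 1)) - 1)) (hcupre j (by omega)) (hcupre (j + 1) hj)
      · have := hr3 (p (r (i + j) - 1)) y (by omega) hyn
        rwa [hrx] at this
      · have := hr3 y (p (r (i + (j + 1)) - 1)) hgap hxn'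
        rwa [hrx'] at this
    have hrymem : r y ∈ occs w (c :: u) := by
      rw [mem_occs_iff]
      exact ⟨le_of_lt (hr1 y hyn), hprefy⟩
    have hry1 : r y + 1 ∈ occs w u := by
      rw [hA]
      exact Finset.mem_image_of_mem _ hrymem
    rw [hocc] at hry1
    simp only [Finset.mem_image, Finset.mem_Ico] at hry1
    obtain ⟨z, ⟨hz1, hz2⟩, hrz⟩ := hry1
    have hzj : z = i + (z - i) := by omega
    have hjk : z - i < k := by omega
    obtain ⟨hxn'', hrx''⟩ := hx (z - i) hjk
    have hryeq : r (p (r (i + (z - i)) - 1)) = r y := by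
      rw [hrx'', ← hzj, hrz]
      simp
    have hyx : p (r (i + (z - i)) - 1) = y := hrinj _ _ hxn'' hyn hryeq
    -- now y is strictly between x_j and x_{j+1}, contradiction
    have hcase : z - i < j ∨ z - i = j ∨ z - i = j + 1 ∨ j + 1 < z - i := by omega
    rcases hcase with h | h | h | h
    · have := hmono (z - i) j h (by omega)
      omega
    · rw [h] at hyx; omega
    · rw [h] at hyx; omega
    · have := hmono (j + 1) (z - i) h hjk
      omega
  have hlin : ∀ j, j < k → p (r (i + j) - 1) = p (r (i + 0) - 1) + j := by
    intro j
    induction j with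
    | zero => intro _; rfl
    | succ j ih =>
      intro hj
      rw [hsucc j hj, ih (by omega)]
      omega
  constructor
  · intro j hj
    have := hlin j hj
    simpa using this
  · ext t
    simp only [Finset.mem_image, Finset.mem_Ico]
    constructor
    · intro ht
      have ht1 : t + 1 ∈ occs w u := by
        rw [hA]
        exact Finset.mem_image_of_mem _ ht
      rw [hocc] at ht1
      simp only [Finset.mem_image, Finset.mem_Ico] at ht1
      obtain ⟨z, ⟨hz1, hz2⟩, hrz⟩ := ht1
      have hjk : z - i < k := by omega
      have hzj : z = i + (z - i) := by omega
      obtain ⟨hxn, hrx⟩ := hx (z - i) hjk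
      have hlin' := hlin (z - i) hjk
      have h0 : p (r (i + 0) - 1) = p (r i - 1) := by norm_num
      refine ⟨p (r (i + (z - i)) - 1), ⟨by omega, by omega⟩, ?_⟩
      rw [hrx, ← hzj, hrz]
      simp
    · rintro ⟨y, ⟨hy1, hy2⟩, rfl⟩
      have h0 : p (r (i + 0) - 1) = p (r i - 1) := by norm_num
      have hjk : y - p (r i - 1) < k := by omega
      have hyeq : y = p (r (i + (y - p (r i - 1))) - 1) := by
        rw [hlin _ hjk, h0]; omega
      rw [hyeq, (hx _ hjk).2]
      exact (hmem _ (hqmem _ hjk)).2.1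
end

section
/- If u and v are distinct supermaximal repeats of w, then the suffix-array index intervals addressing the occurrences of u and of v are disjoint. -/
def SupermaximalRepeat {α : Type*} [DecidableEq α] (w u : List α) : Prop :=
  u <:+: w ∧ 2 ≤ countOcc w u ∧
    ∀ v : List α, u <:+: v → v ≠ u → countOcc w v ≤ 1
/-- Distinct supermaximal repeats have disjoint addressing intervals in the
suffix array. -/
theorem stmt11 {α : Type*} [LinearOrder α] (w : List α) (r : ℕ → ℕ)
    (hr : IsSuffixArray w r) (u v : List α)
    (hu : SupermaximalRepeat w u) (hv : SupermaximalRepeat w v) (huv : u ≠ v) :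
    ∀ t, t < w.length → ¬(u <+: w.drop (r t) ∧ v <+: w.drop (r t)) := by
  rintro t ht ⟨hup, hvp⟩
  rcases List.prefix_or_prefix_of_prefix hup hvp with h | h
  · have h1 := hu.2.2 v h.isInfix (Ne.symm huv)
    have h2 := hv.2.1
    omega
  · have h1 := hv.2.2 u h.isInfix huv
    have h2 := hu.2.1
    omega
end

section
/- If u occurs exactly k ≥ 2 times in w and is maximal to the right, then there exists an index t in the addressing interval [i, i+k-2] such that LCP[t] = |u| exactly. -/
/-- Length of the longest common prefix of two lists. -/
def lcpLen {α : Type*} [DecidableEq α] : List α → List α → ℕ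
  | a :: s, b :: t => if a = b then lcpLen s t + 1 else 0
  | _, _ => 0

lemma lcpLen_ge {α : Type*} [DecidableEq α] :
    ∀ (u s t : List α), u <+: s → u <+: t → u.length ≤ lcpLen s t := by
  intro u
  induction u with
  | nil => intro s t _ _; exact Nat.zero_le _
  | cons a u ih =>
    intro s t hs ht
    obtain ⟨s', rfl⟩ := hs
    obtain ⟨t', rfl⟩ := ht
    simp only [List.cons_append, lcpLen, List.append_eq, if_true, eq_self_iff_true,
      List.length_cons]
    have := ih (u ++ s') (u ++ t') (List.prefix_append u s') (List.prefix_append u t')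
    omega

lemma lcpLen_ext {α : Type*} [DecidableEq α] :
    ∀ (u s t : List α), u <+: s → u <+: t → u.length < lcpLen s t →
      ∃ c, (u ++ [c]) <+: s ∧ (u ++ [c]) <+: t := by
  intro u
  induction u with
  | nil =>
    intro s t _ _ h
    match s, t with
    | [], t => simp [lcpLen] at h
    | a :: s, [] => simp [lcpLen] at h
    | a :: s', b :: t' =>
      by_cases hab : a = b
      · subst hab; exact ⟨a, ⟨s', rfl⟩, ⟨t', rfl⟩⟩
      · simp [lcpLen, hab] at h
  | cons a u ih =>
    intro s t hs ht h
    obtain ⟨s', rfl⟩ := hs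
    obtain ⟨t', rfl⟩ := ht
    simp only [List.cons_append, lcpLen, List.append_eq, if_true, eq_self_iff_true,
      List.length_cons] at h
    obtain ⟨c, hc1, hc2⟩ := ih (u ++ s') (u ++ t')
      (List.prefix_append u s') (List.prefix_append u t') (by omega)
    exact ⟨c, ((List.prefix_append_right_inj (a :: u)).mpr
        ((List.prefix_append_right_inj u).mp hc1) : _),
      ((List.prefix_append_right_inj (a :: u)).mpr
        ((List.prefix_append_right_inj u).mp hc2) : _)⟩

lemma ext_unique {α : Type*} (u : List α) (c c' : α) (s : List α)
    (h : (u ++ [c]) <+: s) (h' : (u ++ [c']) <+: s) : c = c' := by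
  have h1 := List.prefix_of_prefix_length_le h h' (by simp)
  have h2 := h1.eq_of_length (by simp)
  simpa using h2

/-- If `u` occurs exactly `k ≥ 2` times and is maximal to the right, then some LCP value
inside its addressing interval equals `|u|` exactly. -/
theorem stmt13 {α : Type*} [LinearOrder α] (w : List α) (r LCP : ℕ → ℕ)
    (hr : IsSuffixArray w r)
    (hLCP : ∀ i, i + 1 < w.length → LCP i = lcpLen (w.drop (r i)) (w.drop (r (i + 1))))
    (u : List α) (i k : ℕ) (hk : 2 ≤ k) (hik : i + k ≤ w.length)
    (hocc : occs w u = (Finset.Ico i (i + k)).image r)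
    (hright : ∀ c : α, countOcc w (u ++ [c]) < countOcc w u) :
    ∃ t, i ≤ t ∧ t < i + k - 1 ∧ LCP t = u.length := by
  by_contra hcon
  push_neg at hcon
  have hrlt : ∀ t, t < i + k → r t < w.length := fun t ht => hr.1 t (by omega)
  have hmem : ∀ t, i ≤ t → t < i + k → u <+: w.drop (r t) := by
    intro t h1 h2
    have : r t ∈ occs w u := by
      rw [hocc]; exact Finset.mem_image_of_mem r (Finset.mem_Ico.mpr ⟨h1, h2⟩)
    simpa [occs] using (Finset.mem_filter.mp this).2
  have hadj : ∀ t, i ≤ t → t + 1 < i + k →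
      ∃ c, (u ++ [c]) <+: w.drop (r t) ∧ (u ++ [c]) <+: w.drop (r (t + 1)) := by
    intro t h1 h2
    have hl1 := hmem t h1 (by omega)
    have hl2 := hmem (t + 1) (by omega) h2
    have hlcp : u.length < lcpLen (w.drop (r t)) (w.drop (r (t + 1))) := by
      have hge := lcpLen_ge u _ _ hl1 hl2
      have hne : LCP t ≠ u.length := hcon t h1 (by omega)
      rw [hLCP t (by omega)] at hne
      omega
    exact lcpLen_ext u _ _ hl1 hl2 hlcp
  obtain ⟨c, hc1, _⟩ := hadj i le_rfl (by omega)
  have hall : ∀ t, i ≤ t → t < i + k → (u ++ [c]) <+: w.drop (r t) := by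
    intro t h1
    induction t, h1 using Nat.le_induction with
    | base => intro _; exact hc1
    | succ t ht ih =>
      intro h2
      obtain ⟨c', hd1, hd2⟩ := hadj t ht h2
      have hcc : c' = c := ext_unique u c' c _ hd1 (ih (by omega))
      rwa [hcc] at hd2
  have hinj : Set.InjOn r (Finset.Ico i (i + k)) := by
    intro a ha b hb hab
    by_contra hne
    exact hr.2.1 a b (by have := (Finset.mem_Ico.mp ha).2; omega)
      (by have := (Finset.mem_Ico.mp hb).2; omega) hne hab
  have hcardu : countOcc w u = k := by
    rw [countOcc, hocc, Finset.card_image_of_injOn hinj, Nat.card_Ico]; omega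
  have hsub : (Finset.Ico i (i + k)).image r ⊆ occs w (u ++ [c]) := by
    intro x hx
    obtain ⟨t, ht, rfl⟩ := Finset.mem_image.mp hx
    obtain ⟨h1, h2⟩ := Finset.mem_Ico.mp ht
    rw [occs, Finset.mem_filter, Finset.mem_range]
    exact ⟨by have := hrlt t h2; omega, hall t h1 h2⟩
  have hge : k ≤ countOcc w (u ++ [c]) := by
    have := Finset.card_le_card hsub
    rwa [Finset.card_image_of_injOn hinj, Nat.card_Ico, Nat.add_sub_cancel_left] at this
  have := hright c
  omega
end

section
/- If u is maximal to the right with occurrences at suffix-array indices i..i+k-1, and u is maximal to the left, then either r[i] = 1, or r[i+k-1] = 1, or w[r[i]-1] ≠ w[r[i+k-1]-1], or p[r[i+k-1]-1] - p[r[i]-1] ≠ k-1. -/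
lemma lexA {α : Type*} [LinearOrder α] :
    ∀ (P x s t : List α), List.Lex (· < ·) (P ++ s) x → List.Lex (· < ·) x (P ++ t) →
      P <+: x := by
  intro P
  induction P with
  | nil => intro x s t _ _; exact List.nil_prefix
  | cons c P ih =>
    intro x s t h1 h2
    cases x with
    | nil => cases h1
    | cons d x' =>
      cases h1 with
      | rel hcd =>
        cases h2 with
        | rel hdc => exact absurd hdc (lt_asymm hcd)
        | cons h => exact absurd hcd (lt_irrefl _)
      | cons h1' =>
        cases h2 with
        | rel hdc => exact absurd hdc (lt_irrefl _)
        | cons h2' => exact List.cons_prefix_cons.mpr ⟨rfl, ih x' s t h1' h2'⟩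

/-- If `u` is maximal to the right with occurrences at suffix-array indices
`i..i+k-1` and is maximal to the left, then the stated condition on the extreme
occurrences holds. -/
theorem stmt15 {α : Type*} [LinearOrder α] (w : List α) (r p : ℕ → ℕ)
    (hr : IsSuffixArray w r) (hp : ∀ i, i < w.length → p (r i) = i)
    (u : List α) (i k : ℕ) (hk : 2 ≤ k) (hik : i + k ≤ w.length)
    (hocc : occs w u = (Finset.Ico i (i + k)).image r)
    (hright : ∀ c : α, countOcc w (u ++ [c]) < countOcc w u)
    (hleft : ∀ c : α, countOcc w (c :: u) < countOcc w u) :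
    r i = 0 ∨ r (i + k - 1) = 0 ∨ w[r i - 1]? ≠ w[r (i + k - 1) - 1]? ∨
      p (r (i + k - 1) - 1) - p (r i - 1) ≠ k - 1 := by
  by_contra hcon
  push_neg at hcon
  obtain ⟨h1, h2, h3, h4⟩ := hcon
  obtain ⟨hr1, hr2, hr3⟩ := hr
  set n := w.length with hn
  have hinjrange : ∀ x ∈ Finset.range n, ∀ y ∈ Finset.range n, r x = r y → x = y := by
    intro x hx y hy hxy
    by_contra hne
    exact hr2 x y (Finset.mem_range.mp hx) (Finset.mem_range.mp hy) hne hxy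
  have hsurj : ∀ v, v < n → ∃ j, j < n ∧ r j = v := by
    intro v hv
    have himg : (Finset.range n).image r = Finset.range n := by
      apply Finset.eq_of_subset_of_card_le
      · intro x hx
        simp only [Finset.mem_image, Finset.mem_range] at *
        obtain ⟨j, hj, rfl⟩ := hx
        exact hr1 j hj
      · rw [Finset.card_image_of_injOn hinjrange, Finset.card_range]
    have hv' : v ∈ (Finset.range n).image r := himg.symm ▸ Finset.mem_range.mpr hv
    simp only [Finset.mem_image, Finset.mem_range] at hv'
    obtain ⟨j, hj, hjv⟩ := hv'
    exact ⟨j, hj, hjv⟩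
  have hin : i < n := by omega
  have hbn : i + k - 1 < n := by omega
  have hri : r i < n := hr1 i hin
  have hrb : r (i + k - 1) < n := hr1 _ hbn
  have hri1 : r i - 1 < n := by omega
  have hrb1 : r (i + k - 1) - 1 < n := by omega
  obtain ⟨a, han, hra⟩ := hsurj (r i - 1) hri1
  obtain ⟨b, hbn', hrbb⟩ := hsurj (r (i + k - 1) - 1) hrb1
  have hpa : p (r i - 1) = a := by rw [← hra]; exact hp a han
  have hpb : p (r (i + k - 1) - 1) = b := by rw [← hrbb]; exact hp b hbn'
  rw [hpa, hpb] at h4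
  have hbab : b = a + (k - 1) := by omega
  -- the common preceding character
  have hc3 : w[r i - 1]'hri1 = w[r (i + k - 1) - 1]'hrb1 := by
    rw [List.getElem?_eq_getElem hri1, List.getElem?_eq_getElem hrb1] at h3
    exact Option.some.inj h3
  set c := w[r i - 1]'hri1 with hcdef
  have e1 : r i - 1 + 1 = r i := by omega
  have e2 : r (i + k - 1) - 1 + 1 = r (i + k - 1) := by omega
  have hdropa : w.drop (r a) = c :: w.drop (r i) := by
    rw [hra, List.drop_eq_getElem_cons hri1, e1]
  have hdropb : w.drop (r b) = c :: w.drop (r (i + k - 1)) := by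
    rw [hrbb, List.drop_eq_getElem_cons hrb1, e2, ← hc3]
  -- u is a prefix of the extreme suffixes
  have hmemocc : ∀ m, m ∈ Finset.Ico i (i + k) → u <+: w.drop (r m) := by
    intro m hm
    have : r m ∈ occs w u := by
      rw [hocc]
      exact Finset.mem_image_of_mem r hm
    exact (Finset.mem_filter.mp this).2
  have hui : u <+: w.drop (r i) := hmemocc i (Finset.mem_Ico.mpr (by omega))
  have hub : u <+: w.drop (r (i + k - 1)) := hmemocc (i + k - 1) (Finset.mem_Ico.mpr (by omega))
  have hcua : (c :: u) <+: w.drop (r a) := by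
    rw [hdropa]; exact List.cons_prefix_cons.mpr ⟨rfl, hui⟩
  have hcub : (c :: u) <+: w.drop (r b) := by
    rw [hdropb]; exact List.cons_prefix_cons.mpr ⟨rfl, hub⟩
  -- countOcc w u = k
  have hcount : countOcc w u = k := by
    rw [countOcc, hocc, Finset.card_image_of_injOn, Nat.card_Ico]
    · omega
    · intro x hx y hy hxy
      simp only [Finset.coe_Ico, Set.mem_Ico] at hx hy
      exact hinjrange x (Finset.mem_range.mpr (by omega)) y (Finset.mem_range.mpr (by omega)) hxy
  -- every suffix-array slot in [a, a+k) has prefix c :: u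
  have hkey : ∀ m, m ∈ Finset.Ico a (a + k) → (c :: u) <+: w.drop (r m) := by
    intro m hm
    simp only [Finset.mem_Ico] at hm
    have hmn : m < n := by omega
    rcases eq_or_lt_of_le hm.1 with heq | hlt
    · rw [← heq]; exact hcua
    rcases eq_or_lt_of_le (Nat.le_of_lt_succ (by omega : m < b + 1)) with heq | hlt2
    · rw [heq]; exact hcub
    obtain ⟨s, hs⟩ := hcua
    obtain ⟨t, ht⟩ := hcub
    have hLa : List.Lex (· < ·) (w.drop (r a)) (w.drop (r m)) := hr3 a m hlt hmn
    have hLb : List.Lex (· < ·) (w.drop (r m)) (w.drop (r b)) := hr3 m b hlt2 (by omega)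
    rw [← hs] at hLa
    rw [← ht] at hLb
    exact lexA (c :: u) (w.drop (r m)) s t hLa hLb
  have hsubset : (Finset.Ico a (a + k)).image r ⊆ occs w (c :: u) := by
    intro x hx
    simp only [Finset.mem_image] at hx
    obtain ⟨m, hm, rfl⟩ := hx
    have hmn : m < n := by
      simp only [Finset.mem_Ico] at hm; omega
    refine Finset.mem_filter.mpr ⟨Finset.mem_range.mpr ?_, hkey m hm⟩
    have := hr1 m hmn
    omega
  have hge : k ≤ countOcc w (c :: u) := by
    have hcard2 : ((Finset.Ico a (a + k)).image r).card = k := by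
      rw [Finset.card_image_of_injOn, Nat.card_Ico]
      · omega
      · intro x hx y hy hxy
        simp only [Finset.coe_Ico, Set.mem_Ico] at hx hy
        exact hinjrange x (Finset.mem_range.mpr (by omega)) y (Finset.mem_range.mpr (by omega)) hxy
    rw [← hcard2]
    exact Finset.card_le_card hsubset
  have := hleft c
  omega
end
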